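/- Let V be a finite-dimensional real vector space, B : V → V* a linear map with B(v)(v) = 0 for all v ∈ V, and let e^B_ℂ : 𝕋_ℂ V → 𝕋_ℂ V be the complexification of the B-transform e^B(v, α) = (v, α + B(v)). If E ⊆ 𝕋_ℂ V is a maximal isotropic complex subspace with E ∩ σ(E) = 0, then e^B_ℂ(E) is again maximal isotropic, satisfies e^B_ℂ(E) ∩ σ(e^B_ℂ(E)) = 0, and π(e^B_ℂ(E)) = π(E), where π : 𝕋_ℂ V → ℂ ⊗_ℝ V is the projection onto the first summand (so B-transforms preserve the type, the codimension of π(E) in ℂ ⊗_ℝ V). -/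

import Mathlib

open TensorProduct

noncomputable section

/-- The generalized tangent space `𝕋V = V ⊕ V*`, where `V* = Hom_ℝ(V, ℝ)`. -/
abbrev GTan (V : Type*) [AddCommGroup V] [Module ℝ V] := V × (V →ₗ[ℝ] ℝ)

/-- The standard pairing `⟨(u,α),(v,β)⟩ = (α(v)+β(u))/2` on `𝕋V`. -/
def stdPairing (V : Type*) [AddCommGroup V] [Module ℝ V] :
    LinearMap.BilinForm ℝ (GTan V) :=
  LinearMap.mk₂ ℝ (fun x y => (x.2 y.1 + y.2 x.1) / 2)
    (fun x x' y => by simp [LinearMap.add_apply]; ring)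
    (fun c x y => by simp [LinearMap.smul_apply, smul_eq_mul]; ring)
    (fun x y y' => by simp [map_add]; ring)
    (fun c x y => by simp [map_smul, smul_eq_mul]; ring)

/-- The ℂ-bilinear extension of the standard pairing to `𝕋_ℂ V = ℂ ⊗_ℝ 𝕋V`. -/
def stdPairingC (V : Type*) [AddCommGroup V] [Module ℝ V] :
    LinearMap.BilinForm ℂ (ℂ ⊗[ℝ] GTan V) :=
  (stdPairing V).baseChange ℂ

/-- The conjugation `σ` on `𝕋_ℂ V`, induced by complex conjugation on `ℂ`
and the identity on `𝕋V`. -/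
def conjT (V : Type*) [AddCommGroup V] [Module ℝ V] :
    ℂ ⊗[ℝ] GTan V →ₗ[ℝ] ℂ ⊗[ℝ] GTan V :=
  TensorProduct.map Complex.conjAe.toLinearMap LinearMap.id

/-- The `i`-eigenspace `ker (J_ℂ - i·id)` of the complexification `J_ℂ` of `J`. -/
def iEigenspace {V : Type*} [AddCommGroup V] [Module ℝ V] (J : GTan V →ₗ[ℝ] GTan V) :
    Submodule ℂ (ℂ ⊗[ℝ] GTan V) :=
  LinearMap.ker (J.baseChange ℂ -
    (Complex.I • LinearMap.id : ℂ ⊗[ℝ] GTan V →ₗ[ℂ] ℂ ⊗[ℝ] GTan V))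


/-- The `B`-transform `e^B (v, α) = (v, α + B(v))` of `𝕋V` associated to a linear map
`B : V → V*`. -/
def bTransform {V : Type*} [AddCommGroup V] [Module ℝ V] (B : V →ₗ[ℝ] (V →ₗ[ℝ] ℝ)) :
    GTan V →ₗ[ℝ] GTan V :=
  LinearMap.prod (LinearMap.fst ℝ V (V →ₗ[ℝ] ℝ))
    (LinearMap.snd ℝ V (V →ₗ[ℝ] ℝ) + B ∘ₗ LinearMap.fst ℝ V (V →ₗ[ℝ] ℝ))

/-- The projection `π : 𝕋_ℂ V → ℂ ⊗ V` onto the first summand. -/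
def projTanC (V : Type*) [AddCommGroup V] [Module ℝ V] :
    ℂ ⊗[ℝ] GTan V →ₗ[ℂ] ℂ ⊗[ℝ] V :=
  (LinearMap.fst ℝ V (V →ₗ[ℝ] ℝ)).baseChange ℂ


/-!
`e^B` is an isometry of the standard pairing because `B` is skew, it is invertible
(with inverse `e^{-B}`), it commutes with `σ` because it is real, and it does not touch the
`V`-component. Each of these properties survives complexification, and together they carry
isotropy, dimension, `E ∩ σ(E) = 0` and `π(E)` over from `E` to `e^B_ℂ(E)`.
-/

theorem LinearMap.BilinForm.baseChange_compl₁₂ {R A M N : Type*} [CommSemiring R]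
    [CommSemiring A] [Algebra R A] [AddCommMonoid M] [Module R M] [AddCommMonoid N] [Module R N]
    (β : LinearMap.BilinForm R M) (f g : N →ₗ[R] M) :
    LinearMap.BilinForm.baseChange A (β.compl₁₂ f g) =
      (β.baseChange A).compl₁₂ (f.baseChange A) (g.baseChange A) := by
  ext a x
  simp

section BTransform

variable {V : Type*} [AddCommGroup V] [Module ℝ V]

theorem bTransform_comp_bTransform (B B' : V →ₗ[ℝ] (V →ₗ[ℝ] ℝ)) :
    bTransform B ∘ₗ bTransform B' = bTransform (B + B') := by
  ext x <;> simp [bTransform, add_comm]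

theorem bTransform_zero : bTransform (0 : V →ₗ[ℝ] (V →ₗ[ℝ] ℝ)) = LinearMap.id := by
  ext x <;> simp [bTransform]

def bTransformEquiv (B : V →ₗ[ℝ] (V →ₗ[ℝ] ℝ)) : GTan V ≃ₗ[ℝ] GTan V :=
  .ofLinearMap (bTransform B) (bTransform (-B))
    (by rw [bTransform_comp_bTransform, add_neg_cancel B, bTransform_zero])
    (by rw [bTransform_comp_bTransform, neg_add_cancel B, bTransform_zero])

theorem stdPairing_compl₁₂_bTransform {B : V →ₗ[ℝ] (V →ₗ[ℝ] ℝ)} (hB : B.IsAlt) :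
    (stdPairing V).compl₁₂ (bTransform B) (bTransform B) = stdPairing V := by
  refine LinearMap.ext₂ fun x y => ?_
  have hskew := hB.neg x.1 y.1
  simp only [stdPairing, bTransform, LinearMap.compl₁₂_apply, LinearMap.mk₂_apply,
    LinearMap.prod_apply, Function.prod, LinearMap.add_apply, LinearMap.coe_comp,
    Function.comp_apply, LinearMap.fst_apply, LinearMap.snd_apply]
  linarith

theorem projTanC_comp_baseChange_bTransform (B : V →ₗ[ℝ] (V →ₗ[ℝ] ℝ)) :
    projTanC V ∘ₗ (bTransform B).baseChange ℂ = projTanC V := by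
  rw [projTanC, ← LinearMap.baseChange_comp]
  rfl

theorem conjT_baseChange (f : GTan V →ₗ[ℝ] GTan V) (x : ℂ ⊗[ℝ] GTan V) :
    conjT V (f.baseChange ℂ x) = f.baseChange ℂ (conjT V x) := by
  induction x with
  | zero => simp
  | add x y hx hy => simp [hx, hy]
  | tmul a u => simp [conjT]

def IsIsotropicC (E : Submodule ℂ (ℂ ⊗[ℝ] GTan V)) : Prop :=
  ∀ x ∈ E, ∀ y ∈ E, stdPairingC V x y = 0

/-- `E ∩ σ(E) = 0`, stated elementwise because `σ(E)` is only a real subspace. -/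
def DisjointConjT (E : Submodule ℂ (ℂ ⊗[ℝ] GTan V)) : Prop :=
  ∀ x ∈ E, conjT V x ∈ E → x = 0

theorem IsIsotropicC.map_baseChange {E : Submodule ℂ (ℂ ⊗[ℝ] GTan V)} (hE : IsIsotropicC E)
    {f : GTan V →ₗ[ℝ] GTan V} (hf : (stdPairing V).compl₁₂ f f = stdPairing V) :
    IsIsotropicC (E.map (f.baseChange ℂ)) := by
  rintro _ ⟨x, hx, rfl⟩ _ ⟨y, hy, rfl⟩
  rw [stdPairingC, ← LinearMap.compl₁₂_apply, ← LinearMap.BilinForm.baseChange_compl₁₂, hf]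
  exact hE x hx y hy

theorem DisjointConjT.map_baseChange {E : Submodule ℂ (ℂ ⊗[ℝ] GTan V)} (hE : DisjointConjT E)
    (e : GTan V ≃ₗ[ℝ] GTan V) :
    DisjointConjT (E.map ((e : GTan V →ₗ[ℝ] GTan V).baseChange ℂ)) := by
  rintro _ ⟨x, hx, rfl⟩ ⟨y, hy, hxy⟩
  have hconj : conjT V x = y := by
    apply (e.baseChange ℝ ℂ _ _).injective
    exact (conjT_baseChange _ x).symm.trans hxy.symm
  rw [hE x hx (hconj ▸ hy), map_zero]

end BTransform

theorem bTransform_of_maximal_isotropic_general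
    (V : Type*) [AddCommGroup V] [Module ℝ V]
    (B : V →ₗ[ℝ] (V →ₗ[ℝ] ℝ)) (hB : ∀ v : V, B v v = 0)
    (E : Submodule ℂ (ℂ ⊗[ℝ] GTan V))
    (hiso : ∀ x ∈ E, ∀ y ∈ E, stdPairingC V x y = 0)
    (hdim : Module.finrank ℂ E = Module.finrank ℝ V)
    (hconj : ∀ x ∈ E, conjT V x ∈ E → x = 0) :
    (∀ x ∈ E.map ((bTransform B).baseChange ℂ), ∀ y ∈ E.map ((bTransform B).baseChange ℂ),
      stdPairingC V x y = 0) ∧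
    Module.finrank ℂ (E.map ((bTransform B).baseChange ℂ)) = Module.finrank ℝ V ∧
    (∀ x ∈ E.map ((bTransform B).baseChange ℂ),
      conjT V x ∈ E.map ((bTransform B).baseChange ℂ) → x = 0) ∧
    (E.map ((bTransform B).baseChange ℂ)).map (projTanC V) = E.map (projTanC V) := by
  refine ⟨IsIsotropicC.map_baseChange hiso (stdPairing_compl₁₂_bTransform hB), ?_,
    DisjointConjT.map_baseChange hconj (bTransformEquiv B), ?_⟩
  · exact ((bTransformEquiv B).baseChange ℝ ℂ _ _ |>.finrank_map_eq E).trans hdim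
  · rw [← Submodule.map_comp, projTanC_comp_baseChange_bTransform]

/-- If `E ⊆ 𝕋_ℂ V` is maximal isotropic with `E ∩ σ(E) = 0` and `B : V → V*` is
alternating, then the image of `E` under the complexified `B`-transform `e^B_ℂ` is
again maximal isotropic, satisfies `e^B_ℂ(E) ∩ σ(e^B_ℂ(E)) = 0`, and has the same
projection to `ℂ ⊗ V` as `E` (so `B`-transforms preserve the type). -/
theorem bTransform_of_maximal_isotropic
    (V : Type*) [AddCommGroup V] [Module ℝ V] [FiniteDimensional ℝ V]
    (B : V →ₗ[ℝ] (V →ₗ[ℝ] ℝ)) (hB : ∀ v : V, B v v = 0)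
    (E : Submodule ℂ (ℂ ⊗[ℝ] GTan V))
    (hiso : ∀ x ∈ E, ∀ y ∈ E, stdPairingC V x y = 0)
    (hdim : Module.finrank ℂ E = Module.finrank ℝ V)
    (hconj : ∀ x ∈ E, conjT V x ∈ E → x = 0) :
    (∀ x ∈ E.map ((bTransform B).baseChange ℂ), ∀ y ∈ E.map ((bTransform B).baseChange ℂ),
      stdPairingC V x y = 0) ∧
    Module.finrank ℂ (E.map ((bTransform B).baseChange ℂ)) = Module.finrank ℝ V ∧
    (∀ x ∈ E.map ((bTransform B).baseChange ℂ),
      conjT V x ∈ E.map ((bTransform B).baseChange ℂ) → x = 0) ∧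
    (E.map ((bTransform B).baseChange ℂ)).map (projTanC V) = E.map (projTanC V) :=
  bTransform_of_maximal_isotropic_general V B hB E hiso hdim hconj
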